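/- Let r_v, r_u, r_w > 0 with weights Θ_v, Θ_u, Θ_w ∈ [0,π/2] for the opposite edges, and consider the Euclidean circle-packing triangle angles. If r_u and r_w stay bounded while r_v → ∞ with r_u/r_v → 0 and r_w/r_v → 0, then the angle θ_v at vertex v tends to 0 and the sum of angles at u and w tends to π. -/

import Mathlib

open Real Filter

/-- Euclidean distance between the centers of two circles of radii `a`, `b`
meeting at angle `θ`. -/
noncomputable def circleEdgeLength (a b θ : ℝ) : ℝ :=
  Real.sqrt (a ^ 2 + b ^ 2 + 2 * a * b * Real.cos θ)

/-- The angle at the first vertex of the circle-packing triangle with radii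
`a b c` and weights `A B C` (each weight opposite the corresponding vertex). -/
noncomputable def circleAngle (A B C a b c : ℝ) : ℝ :=
  Real.arccos ((circleEdgeLength a c B ^ 2 + circleEdgeLength a b C ^ 2 -
      circleEdgeLength b c A ^ 2) /
    (2 * circleEdgeLength a c B * circleEdgeLength a b C))

/-! The three quotients in `circleAngle` are the law-of-cosines cosines of a genuine Euclidean
triangle: for weights in `[0, π/2]` each edge length lies between the larger of its two radii and
their sum, which gives the triangle inequalities. Hence the three angles sum to `π`, and it is
enough to show `θ_v → 0`. The side `ℓ_v ≤ r_u + r_w` opposite `v` stays bounded while both sides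
at `v` are at least `r_v`, and `1 - cos θ_v ≤ ℓ_v² / (2 ℓ_u ℓ_w)`. -/

open EuclideanGeometry Topology

noncomputable def triangleAngle (x y z : ℝ) : ℝ :=
  arccos ((y ^ 2 + z ^ 2 - x ^ 2) / (2 * y * z))

lemma triangleAngle_comm (x y z : ℝ) : triangleAngle x y z = triangleAngle x z y := by
  unfold triangleAngle; ring_nf

lemma angle_eq_triangleAngle {V P : Type*} [NormedAddCommGroup V] [InnerProductSpace ℝ V]
    [MetricSpace P] [NormedAddTorsor V P] {p₁ p₂ p₃ : P} (h₁ : p₁ ≠ p₂) (h₃ : p₃ ≠ p₂) :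
    ∠ p₁ p₂ p₃ = triangleAngle (dist p₁ p₃) (dist p₁ p₂) (dist p₃ p₂) := by
  have hd₁ : dist p₁ p₂ ≠ 0 := dist_ne_zero.2 h₁
  have hd₃ : dist p₃ p₂ ≠ 0 := dist_ne_zero.2 h₃
  have hcos : cos (∠ p₁ p₂ p₃) =
      (dist p₁ p₂ ^ 2 + dist p₃ p₂ ^ 2 - dist p₁ p₃ ^ 2) / (2 * dist p₁ p₂ * dist p₃ p₂) := by
    rw [eq_div_iff (by simp [hd₁, hd₃]), sq, sq, sq,
      dist_sq_eq_dist_sq_add_dist_sq_sub_two_mul_dist_mul_dist_mul_cos_angle p₁ p₂ p₃]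
    ring
  rw [triangleAngle, ← hcos, arccos_cos (angle_nonneg _ _ _) (angle_le_pi _ _ _)]

lemma exists_triangle_with_sides {x y z : ℝ} (hy : 0 < y) (hz : 0 < z) (hyz : |y - z| ≤ x)
    (hx : x ≤ y + z) :
    ∃ p₁ p₂ p₃ : ℂ, dist p₁ p₃ = x ∧ dist p₁ p₂ = y ∧ dist p₃ p₂ = z := by
  set q := (y ^ 2 + z ^ 2 - x ^ 2) / (2 * y * z)
  have hx0 : 0 ≤ x := (abs_nonneg _).trans hyz
  have hq : q ^ 2 ≤ 1 := by
    rw [sq_le_one_iff_abs_le_one, abs_le, le_div_iff₀ (by positivity), div_le_one (by positivity)]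
    rw [abs_le] at hyz
    constructor <;> nlinarith
  -- `p₂` at the origin, `p₁` on the real axis, `p₃` at angle `arccos q` from it
  refine ⟨y, 0, ⟨z * q, z * √(1 - q ^ 2)⟩, ?_, by simp [hy.le], ?_⟩
  · rw [Complex.dist_eq, ← sq_eq_sq₀ (norm_nonneg _) hx0, Complex.sq_norm, Complex.normSq_apply]
    simp only [Complex.sub_re, Complex.sub_im, Complex.ofReal_re, Complex.ofReal_im]
    ring_nf
    rw [sq_sqrt (by linarith)]
    simp only [q]
    field_simp
    ring
  · rw [Complex.dist_eq, sub_zero, ← sq_eq_sq₀ (norm_nonneg _) hz.le, Complex.sq_norm,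
      Complex.normSq_apply]
    ring_nf
    rw [sq_sqrt (by linarith)]
    ring

lemma triangleAngle_add_triangleAngle_add_triangleAngle {x y z : ℝ} (hx : 0 < x) (hy : 0 < y)
    (hz : 0 < z) (hxyz : x ≤ y + z) (hyxz : y ≤ x + z) (hzxy : z ≤ x + y) :
    triangleAngle x y z + triangleAngle y x z + triangleAngle z x y = π := by
  obtain ⟨p₁, p₂, p₃, h₁₃, h₁₂, h₃₂⟩ :=
    exists_triangle_with_sides hy hz (abs_sub_le_iff.2 ⟨by linarith, by linarith⟩) hxyz
  have h₁₂' : p₁ ≠ p₂ := dist_pos.1 (h₁₂ ▸ hy)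
  have h₃₂' : p₃ ≠ p₂ := dist_pos.1 (h₃₂ ▸ hz)
  have h₁₃' : p₁ ≠ p₃ := dist_pos.1 (h₁₃ ▸ hx)
  rw [← angle_add_angle_add_angle_eq_pi p₃ h₁₂'.symm, angle_eq_triangleAngle h₁₂' h₃₂',
    angle_eq_triangleAngle h₃₂'.symm h₁₃', angle_eq_triangleAngle h₁₃'.symm h₁₂'.symm,
    dist_comm p₂ p₁, dist_comm p₂ p₃, dist_comm p₃ p₁, h₁₃, h₁₂, h₃₂, triangleAngle_comm y]

lemma circleEdgeLength_comm (a b θ : ℝ) : circleEdgeLength a b θ = circleEdgeLength b a θ := by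
  unfold circleEdgeLength; ring_nf

lemma circleEdgeLength_nonneg (a b θ : ℝ) : 0 ≤ circleEdgeLength a b θ :=
  sqrt_nonneg _

lemma left_le_circleEdgeLength {a b θ : ℝ} (ha : 0 ≤ a) (hb : 0 ≤ b) (hθ : 0 ≤ cos θ) :
    a ≤ circleEdgeLength a b θ :=
  le_sqrt_of_sq_le (by nlinarith [mul_nonneg (mul_nonneg ha hb) hθ])

lemma right_le_circleEdgeLength {a b θ : ℝ} (ha : 0 ≤ a) (hb : 0 ≤ b) (hθ : 0 ≤ cos θ) :
    b ≤ circleEdgeLength a b θ :=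
  circleEdgeLength_comm a b θ ▸ left_le_circleEdgeLength hb ha hθ

lemma circleEdgeLength_le_add {a b θ : ℝ} (ha : 0 ≤ a) (hb : 0 ≤ b) :
    circleEdgeLength a b θ ≤ a + b :=
  sqrt_le_iff.2 ⟨by positivity, by nlinarith [mul_nonneg ha hb, cos_le_one θ]⟩

lemma circleAngle_eq_triangleAngle (A B C a b c : ℝ) :
    circleAngle A B C a b c =
      triangleAngle (circleEdgeLength b c A) (circleEdgeLength a c B) (circleEdgeLength a b C) :=
  rfl

lemma circleAngle_add_circleAngle_add_circleAngle {A B C a b c : ℝ} (ha : 0 < a) (hb : 0 < b)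
    (hc : 0 < c) (hA : 0 ≤ cos A) (hB : 0 ≤ cos B) (hC : 0 ≤ cos C) :
    circleAngle A B C a b c + circleAngle B A C b a c + circleAngle C A B c a b = π := by
  have hbcl := left_le_circleEdgeLength hb.le hc.le hA
  have hbcr := right_le_circleEdgeLength hb.le hc.le hA
  have hacl := left_le_circleEdgeLength ha.le hc.le hB
  have hacr := right_le_circleEdgeLength ha.le hc.le hB
  have habl := left_le_circleEdgeLength ha.le hb.le hC
  have habr := right_le_circleEdgeLength ha.le hb.le hC
  have hbc := circleEdgeLength_le_add hb.le hc.le (θ := A)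
  have hac := circleEdgeLength_le_add ha.le hc.le (θ := B)
  have hab := circleEdgeLength_le_add ha.le hb.le (θ := C)
  rw [circleAngle_eq_triangleAngle, circleAngle_eq_triangleAngle, circleAngle_eq_triangleAngle,
    circleEdgeLength_comm b a, circleEdgeLength_comm c b, circleEdgeLength_comm c a]
  exact triangleAngle_add_triangleAngle_add_triangleAngle (by linarith) (by linarith)
    (by linarith) (by linarith) (by linarith) (by linarith)

lemma tendsto_triangleAngle_nhds_zero {ι : Type*} {l : Filter ι} {x y z r : ι → ℝ} {C : ℝ}
    (hr : Tendsto r l atTop) (hx : ∀ᶠ i in l, |x i| ≤ C) (hy : ∀ᶠ i in l, r i ≤ y i)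
    (hz : ∀ᶠ i in l, r i ≤ z i) :
    Tendsto (fun i => triangleAngle (x i) (y i) (z i)) l (𝓝 0) := by
  have hupper : Tendsto (fun i => arccos (1 - C ^ 2 / (2 * r i * r i))) l (𝓝 0) := by
    have hsmall : Tendsto (fun i => C ^ 2 / (2 * r i * r i)) l (𝓝 0) :=
      tendsto_const_nhds.div_atTop <|
        (tendsto_id.const_mul_atTop two_pos).atTop_mul_atTop₀ tendsto_id |>.comp hr
    simpa [Function.comp_def] using
      (continuous_arccos.tendsto _).comp ((tendsto_const_nhds (x := (1 : ℝ))).sub hsmall)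
  refine tendsto_of_tendsto_of_tendsto_of_le_of_le' tendsto_const_nhds hupper
    (Eventually.of_forall fun i => arccos_nonneg _) ?_
  filter_upwards [hr.eventually_gt_atTop 0, hx, hy, hz] with i hri hxi hyi hzi
  have hy0 : 0 < y i := hri.trans_le hyi
  have hz0 : 0 < z i := hri.trans_le hzi
  refine arccos_le_arccos ?_
  calc 1 - C ^ 2 / (2 * r i * r i)
      ≤ 1 - x i ^ 2 / (2 * y i * z i) := by
        have hsq : x i ^ 2 ≤ C ^ 2 := sq_le_sq' (abs_le.1 hxi).1 (abs_le.1 hxi).2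
        have := div_le_div₀ (sq_nonneg C) hsq (by positivity)
          (by gcongr : 2 * r i * r i ≤ 2 * y i * z i)
        linarith
    _ ≤ (y i ^ 2 + z i ^ 2 - x i ^ 2) / (2 * y i * z i) := by
        rw [one_sub_div (by positivity), div_le_div_iff_of_pos_right (by positivity)]
        nlinarith [sq_nonneg (y i - z i)]

theorem circleAngle_degenerate_limit_general
    (Θv Θu Θw : ℝ)
    (hΘv : Θv ∈ Set.Icc 0 (π / 2)) (hΘu : Θu ∈ Set.Icc 0 (π / 2))
    (hΘw : Θw ∈ Set.Icc 0 (π / 2))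
    (rv ru rw : ℕ → ℝ)
    (hrv : Tendsto rv atTop atTop)
    (hbound : ∃ a b : ℝ, 0 < a ∧
      ∀ n, ru n ∈ Set.Icc a b ∧ rw n ∈ Set.Icc a b) :
    Tendsto (fun n => circleAngle Θv Θu Θw (rv n) (ru n) (rw n)) atTop (nhds 0) ∧
    Tendsto (fun n => circleAngle Θu Θv Θw (ru n) (rv n) (rw n) +
      circleAngle Θw Θv Θu (rw n) (rv n) (ru n)) atTop (nhds π) := by
  obtain ⟨a, b, ha, hab⟩ := hbound
  have hru n : 0 < ru n := ha.trans_le (hab n).1.1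
  have hrw n : 0 < rw n := ha.trans_le (hab n).2.1
  have hcos {Θ : ℝ} (hΘ : Θ ∈ Set.Icc 0 (π / 2)) : 0 ≤ cos Θ :=
    cos_nonneg_of_mem_Icc ⟨by linarith [hΘ.1, pi_pos], hΘ.2⟩
  have hrv_pos : ∀ᶠ n in atTop, 0 < rv n := hrv.eventually_gt_atTop 0
  have hθv : Tendsto (fun n => circleAngle Θv Θu Θw (rv n) (ru n) (rw n)) atTop (𝓝 0) := by
    refine tendsto_triangleAngle_nhds_zero (C := b + b) hrv (.of_forall fun n => ?_)
      (hrv_pos.mono fun n hn => left_le_circleEdgeLength hn.le (hrw n).le (hcos hΘu))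
      (hrv_pos.mono fun n hn => left_le_circleEdgeLength hn.le (hru n).le (hcos hΘw))
    rw [abs_of_nonneg (circleEdgeLength_nonneg _ _ _)]
    linarith [circleEdgeLength_le_add (hru n).le (hrw n).le (θ := Θv), (hab n).1.2, (hab n).2.2]
  refine ⟨hθv, ?_⟩
  have hsum : ∀ᶠ n in atTop, π - circleAngle Θv Θu Θw (rv n) (ru n) (rw n) =
      circleAngle Θu Θv Θw (ru n) (rv n) (rw n) + circleAngle Θw Θv Θu (rw n) (rv n) (ru n) := by
    filter_upwards [hrv_pos] with n hn
    linarith [circleAngle_add_circleAngle_add_circleAngle hn (hru n) (hrw n) (hcos hΘv)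
      (hcos hΘu) (hcos hΘw)]
  simpa using ((tendsto_const_nhds (x := π)).sub hθv).congr' hsum

/-- If `r_v → ∞` while `r_u, r_w` stay in a compact subset of `(0,∞)`
(so `r_u/r_v → 0` and `r_w/r_v → 0`), then the angle at `v` tends to `0` and
the sum of the angles at `u` and `w` tends to `π`. -/
theorem circleAngle_degenerate_limit
    (Θv Θu Θw : ℝ)
    (hΘv : Θv ∈ Set.Icc 0 (π / 2)) (hΘu : Θu ∈ Set.Icc 0 (π / 2))
    (hΘw : Θw ∈ Set.Icc 0 (π / 2))
    (rv ru rw : ℕ → ℝ)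
    (hrv : Tendsto rv atTop atTop)
    (hbound : ∃ a b : ℝ, 0 < a ∧
      ∀ n, ru n ∈ Set.Icc a b ∧ rw n ∈ Set.Icc a b)
    (hu : Tendsto (fun n => ru n / rv n) atTop (nhds 0))
    (hw : Tendsto (fun n => rw n / rv n) atTop (nhds 0)) :
    Tendsto (fun n => circleAngle Θv Θu Θw (rv n) (ru n) (rw n)) atTop (nhds 0) ∧
    Tendsto (fun n => circleAngle Θu Θv Θw (ru n) (rv n) (rw n) +
      circleAngle Θw Θv Θu (rw n) (rv n) (ru n)) atTop (nhds π) :=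
  circleAngle_degenerate_limit_general Θv Θu Θw hΘv hΘu hΘw rv ru rw hrv hbound
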